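/- (Sub-argument closure.) Let Δ = (𝒜, 𝒞, ⪯) be a well-defined SAF or well-defined c-SAF with ⪯ reasonable, and let E be an att-complete extension of Δ. Then for every A ∈ E and every A' ∈ Sub(A), A' ∈ E. -/

import Mathlib

namespace ASPIC

/-- An inference rule over the language `L`: a list of antecedents and a consequent. -/
structure InfRule (L : Type) where
  ants : List L
  cons : L

/-- An ASPIC+ argumentation system: a contrariness function, disjoint sets of strict
and defeasible inference rules, and a naming function for (defeasible) rules;
every formula has at least one contradictory. -/
structure ArgSystem (L : Type) where
  contr : L → Set L
  Rs : Set (InfRule L)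
  Rd : Set (InfRule L)
  nm : InfRule L → L
  hdisj : Rs ∩ Rd = ∅
  hcontrad : ∀ φ : L, ∃ ψ : L, ψ ∈ contr φ ∧ φ ∈ contr ψ

/-- A knowledge base: disjoint axioms `Kn` and ordinary premises `Kp`. -/
structure KB (L : Type) where
  Kn : Set L
  Kp : Set L
  hdisj : Kn ∩ Kp = ∅

/-- Argument trees: a premise, or the application of an inference rule to a list of
sub-arguments.  (All such trees are finite.) -/
inductive Arg (L : Type) : Type where
  | prem : L → Arg L
  | app : List (Arg L) → InfRule L → Arg L

namespace Arg

variable {L : Type}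

/-- The conclusion of an argument. -/
def conc : Arg L → L
  | prem φ => φ
  | app _ r => r.cons

/-- The top rule of an argument (none for premises). -/
def topRule : Arg L → Option (InfRule L)
  | prem _ => none
  | app _ r => some r

mutual
  /-- The premises of an argument. -/
  def premises : Arg L → Set L
    | prem φ => {φ}
    | app l _ => premisesL l
  def premisesL : List (Arg L) → Set L
    | [] => ∅
    | a :: as => premises a ∪ premisesL as
end

mutual
  /-- The sub-arguments of an argument (including itself). -/
  def subs : Arg L → Set (Arg L)
    | prem φ => {Arg.prem φ}
    | app l r => subsL l ∪ {Arg.app l r}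
  def subsL : List (Arg L) → Set (Arg L)
    | [] => ∅
    | a :: as => subs a ∪ subsL as
end

mutual
  /-- The rules occurring in an argument. -/
  def rules : Arg L → Set (InfRule L)
    | prem _ => ∅
    | app l r => rulesL l ∪ {r}
  def rulesL : List (Arg L) → Set (InfRule L)
    | [] => ∅
    | a :: as => rules a ∪ rulesL as
end

mutual
  /-- The last defeasible rules of an argument (relative to the set `Rd` of
  defeasible rules). -/
  def lastDefRules (Rd : Set (InfRule L)) : Arg L → Set (InfRule L)
    | prem _ => ∅
    | app l r =>
        let rest := lastDefRulesL Rd l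
        {x | (r ∈ Rd ∧ x = r) ∨ (r ∉ Rd ∧ x ∈ rest)}
  def lastDefRulesL (Rd : Set (InfRule L)) : List (Arg L) → Set (InfRule L)
    | [] => ∅
    | a :: as => lastDefRules Rd a ∪ lastDefRulesL Rd as
end

end Arg

variable {L : Type}

/-- Well-formed arguments on the basis of an argumentation theory `(AS, K)`. -/
inductive IsArg (AS : ArgSystem L) (K : KB L) : Arg L → Prop where
  | prem {φ : L} : φ ∈ K.Kn ∪ K.Kp → IsArg AS K (.prem φ)
  | app {l : List (Arg L)} {r : InfRule L} :
      (∀ a ∈ l, IsArg AS K a) →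
      r ∈ AS.Rs ∪ AS.Rd →
      l.map Arg.conc = r.ants →
      IsArg AS K (.app l r)

/-- The defeasible rules of an argument. -/
def defRules (AS : ArgSystem L) (A : Arg L) : Set (InfRule L) := A.rules ∩ AS.Rd
/-- The strict rules of an argument. -/
def stRules (AS : ArgSystem L) (A : Arg L) : Set (InfRule L) := A.rules ∩ AS.Rs
/-- The ordinary premises of an argument. -/
def premP (K : KB L) (A : Arg L) : Set L := A.premises ∩ K.Kp
/-- The axiom premises of an argument. -/
def premN (K : KB L) (A : Arg L) : Set L := A.premises ∩ K.Kn
/-- An argument is strict if it uses no defeasible rules. -/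
def strictArg (AS : ArgSystem L) (A : Arg L) : Prop := defRules AS A = ∅
/-- An argument is firm if all its premises are axioms. -/
def firmArg (K : KB L) (A : Arg L) : Prop := A.premises ⊆ K.Kn

/-- `φ` is a contrary of `ψ`. -/
def contrary (AS : ArgSystem L) (φ ψ : L) : Prop := φ ∈ AS.contr ψ ∧ ψ ∉ AS.contr φ
/-- `φ` and `ψ` are contradictories of each other. -/
def contrad (AS : ArgSystem L) (φ ψ : L) : Prop := φ ∈ AS.contr ψ ∧ ψ ∈ AS.contr φ

/-- Strict derivability: `SDer AS S φ` iff there is a strict argument for `φ` all of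
whose premises lie in `S` (`S ⊢ φ`). -/
inductive SDer (AS : ArgSystem L) (S : Set L) : L → Prop where
  | prem {φ : L} : φ ∈ S → SDer AS S φ
  | rule {r : InfRule L} : r ∈ AS.Rs → (∀ ψ ∈ r.ants, SDer AS S ψ) → SDer AS S r.cons

/-- `S` is c-consistent: for no pair of contradictories are both strictly derivable. -/
def CCons (AS : ArgSystem L) (S : Set L) : Prop :=
  ∀ φ ψ : L, contrad AS φ ψ → ¬ (SDer AS S φ ∧ SDer AS S ψ)

/-- `S` is minimally c-inconsistent. -/
def MinCIncons (AS : ArgSystem L) (S : Set L) : Prop :=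
  ¬ CCons AS S ∧ ∀ S' ⊂ S, CCons AS S'

/-- Closure under strict rules. -/
inductive ClRs (AS : ArgSystem L) (S : Set L) : L → Prop where
  | base {φ : L} : φ ∈ S → ClRs AS S φ
  | step {r : InfRule L} : r ∈ AS.Rs → (∀ ψ ∈ r.ants, ClRs AS S ψ) → ClRs AS S r.cons

/-- Direct consistency of a set of formulas. -/
def Consistent (AS : ArgSystem L) (S : Set L) : Prop :=
  ¬ ∃ φ ψ : L, φ ∈ S ∧ ψ ∈ S ∧ ψ ∈ AS.contr φ

/-- The argumentation theory is closed under contraposition. -/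
def ContraClosed (AS : ArgSystem L) : Prop :=
  ∀ (S : Set L) (s : L), s ∈ S → ∀ φ : L, SDer AS S φ →
    ∀ nφ : L, contrad AS φ nφ →
      ∃ ns : L, contrad AS s ns ∧ SDer AS ((S \ {s}) ∪ {nφ}) ns

/-- The argumentation theory is closed under transposition. -/
def TransClosed (AS : ArgSystem L) : Prop :=
  ∀ r ∈ AS.Rs, ∀ i : Fin r.ants.length, ∀ nψ : L, contrad AS r.cons nψ →
    ∃ nφ : L, contrad AS (r.ants.get i) nφ ∧
      ({ ants := r.ants.set i.1 nψ, cons := nφ } : InfRule L) ∈ AS.Rs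

/-- Axiom consistency: the strict closure of the axioms is consistent. -/
def AxiomConsistent (AS : ArgSystem L) (K : KB L) : Prop :=
  Consistent AS {φ | ClRs AS K.Kn φ}

/-- c-classicality. -/
def CClassical (AS : ArgSystem L) : Prop :=
  ∀ S : Set L, MinCIncons AS S → ∀ φ ∈ S,
    ∃ nφ : L, contrad AS φ nφ ∧ SDer AS (S \ {φ}) nφ

/-- Well-formedness: contraried formulas are neither axioms nor consequents of strict rules. -/
def WellFormed (AS : ArgSystem L) (K : KB L) : Prop :=
  ∀ φ ψ : L, contrary AS φ ψ → ψ ∉ K.Kn ∧ ∀ r ∈ AS.Rs, r.cons ≠ ψ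

/-- Well-definedness for SAFs. -/
def WellDefinedSAF (AS : ArgSystem L) (K : KB L) : Prop :=
  AxiomConsistent AS K ∧ WellFormed AS K ∧ (ContraClosed AS ∨ TransClosed AS)

/-- Well-definedness for c-SAFs. -/
def WellDefinedCSAF (AS : ArgSystem L) (K : KB L) : Prop :=
  WellDefinedSAF AS K ∧ CClassical AS

/-- The arguments of the SAF defined by `(AS,K)`: all (finite) arguments. -/
def ArgsSAF (AS : ArgSystem L) (K : KB L) : Set (Arg L) := {A | IsArg AS K A}

/-- The arguments of the c-SAF defined by `(AS,K)`: all (finite) c-consistent arguments. -/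
def ArgsCSAF (AS : ArgSystem L) (K : KB L) : Set (Arg L) :=
  {A | IsArg AS K A ∧ CCons AS A.premises}

/-- `A` undercuts `B` on `B'`. -/
def undercutsOn (AS : ArgSystem L) (A B B' : Arg L) : Prop :=
  B' ∈ B.subs ∧ ∃ r ∈ AS.Rd, B'.topRule = some r ∧ A.conc ∈ AS.contr (AS.nm r)

/-- `A` rebuts `B` on `B'`. -/
def rebutsOn (AS : ArgSystem L) (A B B' : Arg L) : Prop :=
  B' ∈ B.subs ∧ ∃ r ∈ AS.Rd, B'.topRule = some r ∧ A.conc ∈ AS.contr B'.conc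

/-- `A` undermines `B` on `B'`. -/
def underminesOn (AS : ArgSystem L) (K : KB L) (A B B' : Arg L) : Prop :=
  B' ∈ B.subs ∧ ∃ φ ∈ K.Kp, B' = Arg.prem φ ∧ A.conc ∈ AS.contr φ

/-- `A` attacks `B` on `B'`. -/
def attacksOn (AS : ArgSystem L) (K : KB L) (A B B' : Arg L) : Prop :=
  undercutsOn AS A B B' ∨ rebutsOn AS A B B' ∨ underminesOn AS K A B B'

/-- `A` attacks `B`. -/
def attacks (AS : ArgSystem L) (K : KB L) (A B : Arg L) : Prop :=
  ∃ B', attacksOn AS K A B B'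

/-- Preference-independent attacks: undercuts, contrary-rebuts and contrary-undermines. -/
def prefIndepOn (AS : ArgSystem L) (K : KB L) (A B B' : Arg L) : Prop :=
  undercutsOn AS A B B' ∨
  (rebutsOn AS A B B' ∧ contrary AS A.conc B'.conc) ∨
  (underminesOn AS K A B B' ∧ contrary AS A.conc B'.conc)

/-- Preference-dependent attacks. -/
def prefDepOn (AS : ArgSystem L) (K : KB L) (A B B' : Arg L) : Prop :=
  attacksOn AS K A B B' ∧ ¬ prefIndepOn AS K A B B'

/-- The strict counterpart `≺` of an ordering `⪯`. -/
def sprec (pre : Arg L → Arg L → Prop) (X Y : Arg L) : Prop := pre X Y ∧ ¬ pre Y X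

/-- `A` defeats `B`, relative to a strict preference relation `slt` (`≺`). -/
def defeats (AS : ArgSystem L) (K : KB L) (slt : Arg L → Arg L → Prop) (A B : Arg L) : Prop :=
  ∃ B', prefIndepOn AS K A B B' ∨ (prefDepOn AS K A B B' ∧ ¬ slt A B')

/-- `A` is a strict continuation of the set of arguments `Γ`. -/
def StrictCont (AS : ArgSystem L) (K : KB L) (A : Arg L) (Γ : Set (Arg L)) : Prop :=
  premP K A = (⋃ B ∈ Γ, premP K B) ∧
  defRules AS A = (⋃ B ∈ Γ, defRules AS B) ∧
  (⋃ B ∈ Γ, stRules AS B) ⊆ stRules AS A ∧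
  (⋃ B ∈ Γ, premN K B) ⊆ premN K A

/-- `B'` has a fallible top: a defeasible top rule, or an ordinary premise. -/
def fallibleTop (AS : ArgSystem L) (K : KB L) (B' : Arg L) : Prop :=
  (∃ r ∈ AS.Rd, B'.topRule = some r) ∨ (∃ φ ∈ K.Kp, B' = Arg.prem φ)

/-- `M(B)`: the maximal fallible sub-arguments of `B`. -/
def MSet (AS : ArgSystem L) (K : KB L) (B : Arg L) : Set (Arg L) :=
  {B' | B' ∈ B.subs ∧ fallibleTop AS K B' ∧
    ¬ ∃ B'', B'' ∈ B.subs ∧ B'' ≠ B ∧ B'' ≠ B' ∧ fallibleTop AS K B'' ∧ B' ∈ B''.subs}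

/-- A reasonable argument ordering. -/
def Reasonable (AS : ArgSystem L) (K : KB L) (pre : Arg L → Arg L → Prop) : Prop :=
  (∀ A B : Arg L, strictArg AS A → firmArg K A →
      (¬ firmArg K B ∨ ¬ strictArg AS B) → sprec pre B A) ∧
  (∀ A B : Arg L, strictArg AS B → firmArg K B → ¬ sprec pre B A) ∧
  (∀ A A' B : Arg L, StrictCont AS K A' {A} →
      (¬ sprec pre A B → ¬ sprec pre A' B) ∧ (¬ sprec pre B A → ¬ sprec pre B A')) ∧
  (∀ s : Finset (Arg L), s.Nonempty → ∀ f : Arg L → Arg L,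
      (∀ C ∈ s, StrictCont AS K (f C) ((↑s : Set (Arg L)) \ {C})) →
      ¬ (∀ C ∈ s, sprec pre (f C) C))

/-- Conflict-freeness of `S` with respect to a relation (attack or defeat). -/
def CFwrt (rel : Arg L → Arg L → Prop) (S : Set (Arg L)) : Prop :=
  ∀ X ∈ S, ∀ Y ∈ S, ¬ rel X Y

/-- `A` is acceptable with respect to `S` (all its defeaters in `𝒜` are defeated from `S`). -/
def Acceptable (𝒜 : Set (Arg L)) (df : Arg L → Arg L → Prop)
    (S : Set (Arg L)) (A : Arg L) : Prop :=
  ∀ B ∈ 𝒜, df B A → ∃ C ∈ S, df C B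

/-- Admissible sets, relative to a conflict-freeness notion `cf` and defeat relation `df`. -/
def Admissible (𝒜 : Set (Arg L)) (cf : Set (Arg L) → Prop)
    (df : Arg L → Arg L → Prop) (S : Set (Arg L)) : Prop :=
  S ⊆ 𝒜 ∧ cf S ∧ ∀ A ∈ S, Acceptable 𝒜 df S A

/-- Complete extensions. -/
def Complete (𝒜 : Set (Arg L)) (cf : Set (Arg L) → Prop)
    (df : Arg L → Arg L → Prop) (S : Set (Arg L)) : Prop :=
  Admissible 𝒜 cf df S ∧ ∀ A ∈ 𝒜, Acceptable 𝒜 df S A → A ∈ S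

/-- Preferred extensions: ⊆-maximal complete extensions. -/
def Preferred (𝒜 : Set (Arg L)) (cf : Set (Arg L) → Prop)
    (df : Arg L → Arg L → Prop) (S : Set (Arg L)) : Prop :=
  Complete 𝒜 cf df S ∧ ∀ S', Complete 𝒜 cf df S' → S ⊆ S' → S' = S

/-- The grounded extension: the ⊆-minimal complete extension. -/
def Grounded (𝒜 : Set (Arg L)) (cf : Set (Arg L) → Prop)
    (df : Arg L → Arg L → Prop) (S : Set (Arg L)) : Prop :=
  Complete 𝒜 cf df S ∧ ∀ S', Complete 𝒜 cf df S' → S ⊆ S'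

/-- Stable extensions. -/
def Stable (𝒜 : Set (Arg L)) (cf : Set (Arg L) → Prop)
    (df : Arg L → Arg L → Prop) (S : Set (Arg L)) : Prop :=
  Preferred 𝒜 cf df S ∧ ∀ B ∈ 𝒜, B ∉ S → ∃ A ∈ S, df A B

/-- The set of antecedents of a rule. -/
def antsSet {L : Type} (r : InfRule L) : Set L := {φ | φ ∈ r.ants}

end ASPIC
namespace ASPIC

/-!
Every attack on a sub-argument `A'` of `A` is an attack on `A` at the same place, so every
defeater of `A'` defeats `A`; hence `A'` is acceptable with respect to any set `A` is
acceptable to. Sub-arguments of (c-consistent) arguments are again (c-consistent) arguments,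
so completeness puts `A'` into the extension.
-/

namespace Arg

variable {L : Type}

theorem mem_subsL {l : List (Arg L)} {B : Arg L} : B ∈ subsL l ↔ ∃ a ∈ l, B ∈ a.subs := by
  induction l with
  | nil => simp [subsL]
  | cons a as ih => simp [subsL, ih]

theorem mem_premisesL {l : List (Arg L)} {φ : L} :
    φ ∈ premisesL l ↔ ∃ a ∈ l, φ ∈ a.premises := by
  induction l with
  | nil => simp [premisesL]
  | cons a as ih => simp [premisesL, ih]

theorem of_mem_subs {P : Arg L → Prop} (hP : ∀ l r, P (app l r) → ∀ a ∈ l, P a) :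
    ∀ {A B : Arg L}, B ∈ A.subs → P A → P B
  | prem _, _, hB, hA => by
      rw [subs, Set.mem_singleton_iff] at hB
      exact hB ▸ hA
  | app l r, B, hB, hA => by
      rcases hB with hB | hB
      · obtain ⟨a, ha, hBa⟩ := mem_subsL.1 hB
        have := List.sizeOf_lt_of_mem ha -- for the termination check
        exact of_mem_subs hP hBa (hP l r hA a ha)
      · rw [Set.mem_singleton_iff] at hB
        exact hB ▸ hA

theorem subs_subset_of_mem_subs {A B : Arg L} (hB : B ∈ A.subs) : B.subs ⊆ A.subs :=
  of_mem_subs (P := fun X => X.subs ⊆ A.subs)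
    (fun _ _ h a ha _ hx => h (Or.inl (mem_subsL.2 ⟨a, ha, hx⟩))) hB subset_rfl

theorem premises_subset_of_mem_subs {A B : Arg L} (hB : B ∈ A.subs) :
    B.premises ⊆ A.premises :=
  of_mem_subs (P := fun X => X.premises ⊆ A.premises)
    (fun _ _ h a ha _ hx => h (mem_premisesL.2 ⟨a, ha, hx⟩)) hB subset_rfl

end Arg

variable {L : Type} {AS : ArgSystem L} {K : KB L}

theorem IsArg.of_mem_subs {A B : Arg L} (hA : IsArg AS K A) (hB : B ∈ A.subs) :
    IsArg AS K B :=
  Arg.of_mem_subs (fun _ _ h => by cases h with | app hl _ _ => exact hl) hB hA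

theorem SDer.mono {S T : Set L} (hST : S ⊆ T) {φ : L} (h : SDer AS S φ) : SDer AS T φ := by
  induction h with
  | prem h => exact .prem (hST h)
  | rule hr _ ih => exact .rule hr ih

theorem CCons.mono {S T : Set L} (hST : S ⊆ T) (hT : CCons AS T) : CCons AS S :=
  fun φ ψ hφψ ⟨hφ, hψ⟩ => hT φ ψ hφψ ⟨hφ.mono hST, hψ.mono hST⟩

theorem mem_argsSAF_of_mem_subs {A B : Arg L} (hA : A ∈ ArgsSAF AS K) (hB : B ∈ A.subs) :
    B ∈ ArgsSAF AS K :=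
  IsArg.of_mem_subs hA hB

theorem mem_argsCSAF_of_mem_subs {A B : Arg L} (hA : A ∈ ArgsCSAF AS K) (hB : B ∈ A.subs) :
    B ∈ ArgsCSAF AS K :=
  ⟨hA.1.of_mem_subs hB, hA.2.mono (Arg.premises_subset_of_mem_subs hB)⟩

theorem attacksOn.mem_subs {A B B' : Arg L} (h : attacksOn AS K A B B') : B' ∈ B.subs := by
  rcases h with h | h | h <;> exact h.1

theorem prefIndepOn.attacksOn {A B B' : Arg L} (h : prefIndepOn AS K A B B') :
    attacksOn AS K A B B' := by
  rcases h with h | h | h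
  · exact Or.inl h
  · exact Or.inr (Or.inl h.1)
  · exact Or.inr (Or.inr h.1)

/-- Whether `A` attacks `B` on `B'` depends on `B` only through `B' ∈ B.subs`. -/
theorem prefIndepOn_congr {A B C B' : Arg L} (hB : B' ∈ B.subs) (hC : B' ∈ C.subs) :
    (prefIndepOn AS K A B B' ↔ prefIndepOn AS K A C B') ∧
      (attacksOn AS K A B B' ↔ attacksOn AS K A C B') := by
  simp only [prefIndepOn, attacksOn, undercutsOn, rebutsOn, underminesOn, hB, hC, true_and]

theorem defeats_of_mem_subs {slt : Arg L → Arg L → Prop} {A A' B : Arg L}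
    (hA' : A' ∈ A.subs) (h : defeats AS K slt B A') : defeats AS K slt B A := by
  obtain ⟨B', h⟩ := h
  have hB' : B' ∈ A'.subs := by
    rcases h with h | h
    · exact h.attacksOn.mem_subs
    · exact h.1.1.mem_subs
  obtain ⟨hindep, hatt⟩ :=
    prefIndepOn_congr (A := B) (K := K) hB' (Arg.subs_subset_of_mem_subs hA' hB')
  refine ⟨B', ?_⟩
  rcases h with h | ⟨⟨ha, hni⟩, hs⟩
  · exact Or.inl (hindep.1 h)
  · exact Or.inr ⟨⟨hatt.1 ha, mt hindep.2 hni⟩, hs⟩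

theorem Acceptable.of_mem_subs {𝒜 S : Set (Arg L)} {slt : Arg L → Arg L → Prop}
    {A A' : Arg L} (hA : Acceptable 𝒜 (defeats AS K slt) S A) (hA' : A' ∈ A.subs) :
    Acceptable 𝒜 (defeats AS K slt) S A' :=
  fun B hB hdef => hA B hB (defeats_of_mem_subs hA' hdef)

theorem Complete.mem_of_mem_subs {𝒜 E : Set (Arg L)} {cf : Set (Arg L) → Prop}
    {slt : Arg L → Arg L → Prop} (h𝒜 : ∀ A ∈ 𝒜, ∀ A' ∈ A.subs, A' ∈ 𝒜)
    (hE : Complete 𝒜 cf (defeats AS K slt) E) {A A' : Arg L} (hA : A ∈ E)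
    (hA' : A' ∈ A.subs) : A' ∈ E :=
  hE.2 A' (h𝒜 A (hE.1.1 hA) A' hA') ((hE.1.2.2 A hA).of_mem_subs hA')

/-- Theorem: sub-argument closure: in a well-defined (c-)SAF with a
reasonable ordering, every att-complete extension contains all sub-arguments of its
members. -/
theorem statement4 {L : Type} (AS : ArgSystem L) (K : KB L) (pre : Arg L → Arg L → Prop)
    (𝒜 : Set (Arg L))
    (hcase :
      (𝒜 = ArgsSAF AS K ∧ WellDefinedSAF AS K) ∨
      (𝒜 = ArgsCSAF AS K ∧ WellDefinedCSAF AS K))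
    (hreas : Reasonable AS K pre)
    (E : Set (Arg L))
    (hE : Complete 𝒜 (CFwrt (attacks AS K)) (defeats AS K (sprec pre)) E) :
    ∀ A ∈ E, ∀ A' ∈ A.subs, A' ∈ E := by
  have h𝒜 : ∀ A ∈ 𝒜, ∀ A' ∈ A.subs, A' ∈ 𝒜 := by
    rcases hcase with ⟨rfl, -⟩ | ⟨rfl, -⟩
    · exact fun _ hA _ => mem_argsSAF_of_mem_subs hA
    · exact fun _ hA _ => mem_argsCSAF_of_mem_subs hA
  exact fun A hA A' hA' => hE.mem_of_mem_subs h𝒜 hA hA'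

end ASPIC
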